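/- arXiv:1809.03418 — 3 statements merged into one kernel-verified Lean document; each statement's English description precedes it below -/
import Mathlib

section
/- Let A_0, A_1, ..., A_n be Hermitian m×m matrices. If A_1, ..., A_n are positive semidefinite, then the polynomial p(z) = det(A_0 + z_1 A_1 + ... + z_n A_n) is stable, i.e., either p is identically zero or p(z) ≠ 0 whenever every coordinate z_j has strictly positive imaginary part. -/
open scoped ComplexOrder
open Matrix

/-!
If `(B + ∑ zᵢ Cᵢ) v = 0` with every `Im zᵢ > 0`, take the quadratic form against `v`: the
Hermitian part `v* B v` is real and each `v* Cᵢ v` is a nonnegative real, so the imaginary part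
reads `∑ Im zᵢ · v* Cᵢ v = 0`. Hence every `v* Cᵢ v` vanishes, so `Cᵢ v = 0` by semidefiniteness,
and then `B v = 0`. Thus `v` lies in the kernel of the pencil at every point, and its determinant
vanishes identically.
-/

namespace Matrix

variable {ι n : Type*} [Fintype ι] [Fintype n]

lemma star_dotProduct_pencil_mulVec (B : Matrix n n ℂ) (C : ι → Matrix n n ℂ) (z : ι → ℂ)
    (v : n → ℂ) :
    star v ⬝ᵥ (B + ∑ i, z i • C i) *ᵥ v = star v ⬝ᵥ B *ᵥ v + ∑ i, z i * (star v ⬝ᵥ C i *ᵥ v) := by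
  simp only [add_mulVec, sum_mulVec, smul_mulVec, dotProduct_add, dotProduct_sum, dotProduct_smul,
    smul_eq_mul]

lemma mulVec_eq_zero_of_pencil_mulVec_eq_zero {B : Matrix n n ℂ} {C : ι → Matrix n n ℂ}
    (hB : B.IsHermitian) (hC : ∀ i, (C i).PosSemidef) {z : ι → ℂ} (hz : ∀ i, 0 < (z i).im)
    {v : n → ℂ} (hv : (B + ∑ i, z i • C i) *ᵥ v = 0) (i : ι) : C i *ᵥ v = 0 := by
  have hq : ∀ i, 0 ≤ (star v ⬝ᵥ C i *ᵥ v).re ∧ (star v ⬝ᵥ C i *ᵥ v).im = 0 := fun i ↦ by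
    simpa [Complex.nonneg_iff, eq_comm] using (hC i).dotProduct_mulVec_nonneg v
  have him : ∑ i, (z i).im * (star v ⬝ᵥ C i *ᵥ v).re = 0 := by
    have hBv : (star v ⬝ᵥ B *ᵥ v).im = 0 := hB.im_star_dotProduct_mulVec_self v
    have h := congrArg Complex.im (star_dotProduct_pencil_mulVec B C z v)
    simpa [hv, hBv, Complex.im_sum, Complex.mul_im, (hq _).2] using h.symm
  have hterm := (Finset.sum_eq_zero_iff_of_nonneg fun j _ ↦
    mul_nonneg (hz j).le (hq j).1).mp him i (Finset.mem_univ i)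
  have hqi : star v ⬝ᵥ C i *ᵥ v = 0 :=
    Complex.ext ((mul_eq_zero.mp hterm).resolve_left (hz i).ne') (hq i).2
  exact ((hC i).dotProduct_mulVec_zero_iff v).mp hqi

lemma pencil_mulVec_eq_zero_of_pencil_mulVec_eq_zero {B : Matrix n n ℂ} {C : ι → Matrix n n ℂ}
    (hB : B.IsHermitian) (hC : ∀ i, (C i).PosSemidef) {z : ι → ℂ} (hz : ∀ i, 0 < (z i).im)
    {v : n → ℂ} (hv : (B + ∑ i, z i • C i) *ᵥ v = 0) (w : ι → ℂ) :
    (B + ∑ i, w i • C i) *ᵥ v = 0 := by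
  have hCv := mulVec_eq_zero_of_pencil_mulVec_eq_zero hB hC hz hv
  simp only [add_mulVec, sum_mulVec, smul_mulVec, hCv, smul_zero, Finset.sum_const_zero,
    add_zero] at hv ⊢
  exact hv

theorem det_pencil_eq_zero_of_det_eq_zero [DecidableEq n] {B : Matrix n n ℂ}
    {C : ι → Matrix n n ℂ} (hB : B.IsHermitian) (hC : ∀ i, (C i).PosSemidef) {z : ι → ℂ}
    (hz : ∀ i, 0 < (z i).im) (hdet : (B + ∑ i, z i • C i).det = 0) (w : ι → ℂ) :
    (B + ∑ i, w i • C i).det = 0 := by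
  obtain ⟨v, hv0, hv⟩ := exists_mulVec_eq_zero_iff.mpr hdet
  exact exists_mulVec_eq_zero_iff.mp
    ⟨v, hv0, pencil_mulVec_eq_zero_of_pencil_mulVec_eq_zero hB hC hz hv w⟩

end Matrix

/-- A function `p : (Fin n → ℂ) → ℂ` (thought of as a polynomial) is *stable* if it is
identically zero or has no zeros in `ℍⁿ`. -/
theorem stmt_0 (n m : ℕ) (A : Fin (n + 1) → Matrix (Fin m) (Fin m) ℂ)
    (hHerm : ∀ i, (A i).IsHermitian)
    (hPSD : ∀ i : Fin n, (A i.succ).PosSemidef)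
    (p : (Fin n → ℂ) → ℂ)
    (hp : ∀ z : Fin n → ℂ, p z = (A 0 + ∑ i : Fin n, z i • A i.succ).det) :
    (∀ z, p z = 0) ∨ ∀ z : Fin n → ℂ, (∀ j, 0 < (z j).im) → p z ≠ 0 := by
  refine or_iff_not_imp_right.mpr fun h w ↦ ?_
  push Not at h
  obtain ⟨z, hz, hpz⟩ := h
  rw [hp] at hpz ⊢
  exact det_pencil_eq_zero_of_det_eq_zero (hHerm 0) hPSD hz hpz w
end

section
/- If p ∈ ℂ[x_1,...,x_n] is a stable polynomial, then its partial derivative ∂p/∂x_1 is also stable. -/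
/-!
Write `q ∈ (ℂ[x₂,…,xₙ])[x₁]` for `p` viewed as a polynomial in `x₁`, of degree `d`. For
`w ∈ ℍⁿ⁻¹` the one-variable polynomial `t ↦ p(t, w)` has no zeros in `ℍ`, hence by
Gauss–Lucas neither does its derivative, as long as it is not constant. It is not constant
because the leading coefficient `c_d` of `q` has no zeros in `ℍⁿ⁻¹`: `c_d(w)` is the limit of
`u^d q_w(1/u)` as `u → 0` from the lower half-plane, and these are zero-free polynomials in
`w ∈ ℍⁿ⁻¹`. Restricted to a complex line through a zero `w₀` of `c_d` and a point `w₁` with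
`c_d(w₁) ≠ 0`, a Hurwitz argument applies: a polynomial of degree `≤ m` without zeros in
`|s| < R` satisfies `|f(s)| ≤ (3/2)^m |f(0)|` for `|s| ≤ R/2`, and this bound passes to the
limit, forcing `c_d` to vanish on a disc of the line.
-/

open MvPolynomial

/-- A polynomial `p ∈ ℂ[x₁,…,xₙ]` is *stable* if it is identically zero or has no zeros
in `ℍⁿ`, where `ℍ` is the open upper half-plane. -/
def Stable {n : ℕ} (p : MvPolynomial (Fin n) ℂ) : Prop :=
  p = 0 ∨ ∀ z : Fin n → ℂ, (∀ i, 0 < (z i).im) → eval z p ≠ 0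

open Filter Topology
open scoped Polynomial

namespace Polynomial

theorem norm_eval_le_three_halves_pow_mul_norm_eval_zero {f : ℂ[X]} {m : ℕ}
    (hdeg : f.natDegree ≤ m) {R : ℝ} (hroots : ∀ z ∈ f.roots, R ≤ ‖z‖) {s : ℂ}
    (hs : 2 * ‖s‖ ≤ R) : ‖f.eval s‖ ≤ (3 / 2) ^ m * ‖f.eval 0‖ := by
  have hnorm (x : ℂ) :
      ‖f.eval x‖ = ‖f.leadingCoeff‖ * (f.roots.map fun z => ‖x - z‖).prod := by
    conv_lhs =>
      rw [← C_leadingCoeff_mul_prod_multiset_X_sub_C (p := f)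
        IsAlgClosed.card_roots_eq_natDegree]
    simp only [eval_mul, eval_C, eval_multiset_prod, Multiset.map_map, Function.comp_def,
      eval_sub, eval_X, norm_mul]
    exact congrArg _ ((map_multiset_prod (normHom : ℂ →*₀ ℝ) _).trans
      (by rw [Multiset.map_map]; rfl))
  have hfactor (z : ℂ) (hz : z ∈ f.roots) : ‖s - z‖ ≤ 3 / 2 * ‖0 - z‖ := by
    have := hroots z hz
    have := norm_sub_le s z
    rw [zero_sub, norm_neg]
    linarith
  have hprod_nonneg : 0 ≤ (f.roots.map fun z => ‖0 - z‖).prod :=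
    Multiset.prod_map_nonneg fun _ _ => norm_nonneg _
  calc ‖f.eval s‖
      ≤ ‖f.leadingCoeff‖ * (f.roots.map fun z => 3 / 2 * ‖0 - z‖).prod := by
        rw [hnorm]
        gcongr
        exact Multiset.prod_map_le_prod_map₀ _ _ (fun _ _ => norm_nonneg _) hfactor
    _ = (3 / 2) ^ f.roots.card * (‖f.leadingCoeff‖ * (f.roots.map fun z => ‖0 - z‖).prod) := by
        rw [Multiset.prod_map_mul, Multiset.map_const', Multiset.prod_replicate, mul_left_comm]
    _ ≤ (3 / 2) ^ m * ‖f.eval 0‖ := by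
        rw [hnorm]
        gcongr
        · norm_num
        · exact (card_roots' f).trans hdeg

/-- Hurwitz's theorem for polynomials of bounded degree. -/
theorem eq_zero_of_tendsto_of_forall_eval_ne_zero {ι : Type*} {l : Filter ι} [l.NeBot]
    {P : ι → ℂ[X]} {f : ℂ[X]} {m : ℕ} {U : Set ℂ} (hU : U ∈ 𝓝 0)
    (hdeg : ∀ᶠ i in l, (P i).natDegree ≤ m) (hne : ∀ᶠ i in l, ∀ s ∈ U, (P i).eval s ≠ 0)
    (hlim : ∀ s, Tendsto (fun i => (P i).eval s) l (𝓝 (f.eval s))) (h0 : f.eval 0 = 0) :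
    f = 0 := by
  obtain ⟨R, hR, hball⟩ := Metric.mem_nhds_iff.mp hU
  have hbound (s : ℂ) (hs : 2 * ‖s‖ ≤ R) : ‖f.eval s‖ ≤ (3 / 2) ^ m * ‖f.eval 0‖ := by
    refine le_of_tendsto_of_tendsto (hlim s).norm ((hlim 0).norm.const_mul _) ?_
    filter_upwards [hdeg, hne] with i hi hi'
    refine norm_eval_le_three_halves_pow_mul_norm_eval_zero hi
      (fun z hz => not_lt.mp fun hzR => ?_) hs
    exact hi' z (hball (mem_ball_zero_iff.mpr hzR)) (mem_roots'.mp hz).2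
  refine eq_zero_of_infinite_isRoot _ (infinite_of_mem_nhds (0 : ℂ)
    (mem_of_superset (Metric.closedBall_mem_nhds 0 (half_pos hR)) fun s hs => ?_))
  have := hbound s (by rw [mem_closedBall_zero_iff] at hs; linarith)
  rw [h0, norm_zero, mul_zero] at this
  exact norm_le_zero_iff.mp this

theorem eval_derivative_ne_zero_of_forall_im_pos {f : ℂ[X]} (hf : 0 < f.degree)
    (hroots : ∀ z, 0 < z.im → f.eval z ≠ 0) {z : ℂ} (hz : 0 < z.im) :
    f.derivative.eval z ≠ 0 := by
  have hconv : Convex ℝ {w : ℂ | w.im ≤ 0} := convex_halfSpace_le Complex.imLm.isLinear 0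
  have hsub : f.rootSet ℂ ⊆ {w : ℂ | w.im ≤ 0} := fun w hw => by
    rw [mem_rootSet, coe_aeval_eq_eval] at hw
    exact not_lt.mp fun h => hroots w h hw.2
  have hderiv : f.derivative ≠ 0 := fun h =>
    not_lt.mpr (natDegree_eq_zero_iff_degree_le_zero.mp (derivative_eq_zero.mp h)) hf
  intro h
  have : z ∈ {w : ℂ | w.im ≤ 0} := hconv.convexHull_subset_iff.mpr hsub
    (rootSet_derivative_subset_convexHull_rootSet hf (by
      rw [mem_rootSet, coe_aeval_eq_eval]
      exact ⟨hderiv, h⟩))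
  exact not_lt.mpr this hz

theorem eval_reflect_ne_zero {K : Type*} [Field K] {f : K[X]} {N : ℕ} (hf : f.natDegree ≤ N)
    {u : K} (hu : u ≠ 0) (h : f.eval u⁻¹ ≠ 0) : (f.reflect N).eval u ≠ 0 := by
  let := invertibleOfNonzero (inv_ne_zero hu)
  have := eval₂_reflect_eq_zero_iff (RingHom.id K) u⁻¹ N f hf
  rw [invOf_eq_inv, inv_inv] at this
  exact fun h0 => h (this.mp h0)

theorem natDegree_eval_C_le {R : Type*} [CommSemiring R] (B : R[X][X]) (u : R) :
    (B.eval (C u)).natDegree ≤ B.support.sup fun j => (B.coeff j).natDegree := by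
  rw [eval_eq_sum, Polynomial.sum_def]
  refine natDegree_sum_le_of_forall_le _ _ fun j hj => ?_
  rw [← C_pow]
  exact (natDegree_mul_C_le _ _).trans (Finset.le_sup (f := fun j => (B.coeff j).natDegree) hj)

end Polynomial

namespace MvPolynomial

theorem finSuccEquiv_pderiv_zero {R : Type*} [CommSemiring R] {n : ℕ}
    (p : MvPolynomial (Fin (n + 1)) R) :
    finSuccEquiv R n (pderiv 0 p) = Polynomial.derivative (finSuccEquiv R n p) := by
  induction p using MvPolynomial.induction_on with
  | C a => simp [finSuccEquiv_apply]
  | add p q hp hq => simp [map_add, hp, hq]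
  | mul_X p i hp =>
    have hX : finSuccEquiv R n (pderiv 0 (X i)) =
        Polynomial.derivative (finSuccEquiv R n (X i)) := by
      induction i using Fin.cases with
      | zero => simp [finSuccEquiv_X_zero]
      | succ j => simp [pderiv_X_of_ne (Fin.succ_ne_zero j), finSuccEquiv_X_succ]
    simp only [pderiv_mul, map_add, map_mul, Polynomial.derivative_mul, hp, hX]

theorem evalRingHom_comp_aeval_line {R σ : Type*} [CommSemiring R] (w v : σ → R) (s : R) :
    (Polynomial.evalRingHom s).comp
      (aeval fun i => Polynomial.C (w i) + Polynomial.C (v i) * Polynomial.X).toRingHom =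
      eval (w + s • v) := by
  refine RingHom.ext fun p => ?_
  change Polynomial.aeval s (aeval _ p) = aeval (w + s • v) p
  rw [comp_aeval_apply]
  congr 2
  ext i
  simp
  ring

theorem isOpen_setOf_forall_im_pos_add_smul {σ : Type*} [Finite σ] (w v : σ → ℂ) :
    IsOpen {s : ℂ | ∀ i, 0 < ((w + s • v) i).im} := by
  simp only [Set.ofPred_forall]
  exact isOpen_iInter_of_finite fun i => isOpen_lt continuous_const (by fun_prop)

theorem eval_leadingCoeff_ne_zero_of_forall_im_pos {σ : Type*} [Finite σ]
    {q : (MvPolynomial σ ℂ)[X]} (hq0 : q ≠ 0)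
    (hq : ∀ w : σ → ℂ, (∀ i, 0 < (w i).im) → ∀ c : ℂ, 0 < c.im →
      (q.map (eval w)).eval c ≠ 0)
    {w₀ : σ → ℂ} (hw₀ : ∀ i, 0 < (w₀ i).im) : eval w₀ q.leadingCoeff ≠ 0 := by
  intro hlc
  obtain ⟨w₁, hw₁⟩ : ∃ w₁, eval w₁ q.leadingCoeff ≠ 0 := by
    by_contra! h
    exact Polynomial.leadingCoeff_ne_zero.mpr hq0 (MvPolynomial.funext fun x => by simpa using h x)
  set v := w₁ - w₀
  set φ : MvPolynomial σ ℂ →+* ℂ[X] :=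
    (aeval fun i => Polynomial.C (w₀ i) + Polynomial.C (v i) * Polynomial.X).toRingHom
  have hφ (s : ℂ) (x : MvPolynomial σ ℂ) : (φ x).eval s = eval (w₀ + s • v) x :=
    RingHom.congr_fun (evalRingHom_comp_aeval_line w₀ v s) x
  set d := q.natDegree
  -- `B(s, u) = u^d q_{w₀ + s • v}(1/u)`, a polynomial in `s` and `u`
  set B : ℂ[X][X] := (q.map φ).reflect d
  have hB (s u : ℂ) :
      (B.eval (Polynomial.C u)).eval s = ((q.map (eval (w₀ + s • v))).reflect d).eval u := by
    change Polynomial.evalEval s u B = _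
    rw [← Polynomial.map_evalRingHom_eval, ← Polynomial.reflect_map, Polynomial.map_map,
      evalRingHom_comp_aeval_line]
  have hU : {s : ℂ | ∀ i, 0 < ((w₀ + s • v) i).im} ∈ 𝓝 0 :=
    (isOpen_setOf_forall_im_pos_add_smul w₀ v).mem_nhds (by simpa using hw₀)
  refine (show φ q.leadingCoeff ≠ 0 from fun h => hw₁ ?_)
    (Polynomial.eq_zero_of_tendsto_of_forall_eval_ne_zero (l := 𝓝[>] (0 : ℝ))
      (P := fun ε => B.eval (Polynomial.C (-ε * Complex.I))) hU
      (Eventually.of_forall fun ε => Polynomial.natDegree_eval_C_le B _) ?_ ?_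
      (by simpa [hφ] using hlc))
  · simpa [hφ, v] using congrArg (Polynomial.eval 1) h
  · filter_upwards [self_mem_nhdsWithin] with ε (hε : 0 < ε) s hs
    rw [hB]
    refine Polynomial.eval_reflect_ne_zero Polynomial.natDegree_map_le (by simp [hε.ne']) ?_
    exact hq _ hs _ (by simp [Complex.inv_im, hε])
  · intro s
    have h0 : (φ q.leadingCoeff).eval s =
        ((q.map (eval (w₀ + s • v))).reflect d).eval (-((0 : ℝ) : ℂ) * Complex.I) := by
      rw [Complex.ofReal_zero, neg_zero, zero_mul, ← Polynomial.coeff_zero_eq_eval_zero,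
        Polynomial.coeff_reflect, Polynomial.revAt_zero, Polynomial.coeff_map, hφ]
      rfl
    simp only [hB, h0]
    exact ((Polynomial.continuous _).comp (by fun_prop)).continuousAt.tendsto.mono_left
      nhdsWithin_le_nhds

end MvPolynomial

theorem stmt_1 (n : ℕ) (p : MvPolynomial (Fin (n + 1)) ℂ) (hp : Stable p) :
    Stable (pderiv 0 p) := by
  rcases hp with rfl | hp
  · exact Or.inl (map_zero _)
  set q := finSuccEquiv ℂ n p
  have hq (w : Fin n → ℂ) (hw : ∀ i, 0 < (w i).im) (c : ℂ) (hc : 0 < c.im) :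
      (q.map (eval w)).eval c ≠ 0 := by
    rw [← eval_eq_eval_mv_eval']
    exact hp _ (Fin.cases hc hw)
  rcases eq_or_ne q.natDegree 0 with hd | hd
  · left
    apply (finSuccEquiv ℂ n).injective
    rw [finSuccEquiv_pderiv_zero, map_zero, Polynomial.derivative_eq_zero.mpr hd]
  right
  intro z hz
  have hlc := eval_leadingCoeff_ne_zero_of_forall_im_pos (fun h => hd (by simp [h])) hq
    (fun i => hz i.succ)
  rw [← Fin.cons_self_tail z, eval_eq_eval_mv_eval', finSuccEquiv_pderiv_zero,
    ← Polynomial.derivative_map]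
  refine Polynomial.eval_derivative_ne_zero_of_forall_im_pos ?_ (hq _ fun i => hz i.succ) (hz 0)
  rw [← Polynomial.natDegree_pos_iff_degree_pos,
    Polynomial.natDegree_map_of_leadingCoeff_ne_zero _ hlc]
  exact Nat.pos_of_ne_zero hd
end

section
/- If p ∈ ℂ[x_1,...,x_n] is stable and a ∈ ℂ has nonnegative imaginary part, then the polynomial obtained by substituting x_1 = a, i.e., q(x_2,...,x_n) = p(a, x_2,...,x_n), is stable. -/
open MvPolynomial

/-!
Suppose `q ≠ 0` vanishes at a point `z` of `Hⁿ`, and pick `w` with `q w ≠ 0`. On the complex line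
`t ↦ z + t (w - z)` the entire function `g t = q (z + t (w - z)) = p (a, z + t (w - z))` has an
isolated zero at `t = 0`. Hurwitz's argument (the minimum modulus principle on a small circle
around `0`, on which `|g|` is bounded below) shows that every small perturbation
`t ↦ p (x, z + t (w - z))` with `x` close to `a` still has a zero close to `0`, where all
coordinates stay in `H`. Since `Im a ≥ 0`, such an `x` can be taken in `H`, contradicting the
stability of `p`.
-/

open Metric Set Filter Topology

theorem Complex.exists_zero_of_norm_lt_norm_on_sphere {f : ℂ → ℂ} {c : ℂ} {r : ℝ} (hr : 0 < r)
    (hf : DiffContOnCl ℂ f (ball c r)) (h : ∀ z ∈ sphere c r, ‖f c‖ < ‖f z‖) :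
    ∃ z ∈ closedBall c r, f z = 0 := by
  by_contra! hne
  rw [← closure_ball c hr.ne'] at hne
  -- maximum modulus principle for `1 / f`
  obtain ⟨z, hz, hmax⟩ := exists_mem_frontier_isMaxOn_norm isBounded_ball
    (nonempty_ball.mpr hr) (hf.inv hne)
  rw [frontier_ball c hr.ne'] at hz
  have hc := hmax (subset_closure (mem_ball_self hr))
  simp only [mem_ofPred_eq, Function.comp_apply, Pi.inv_apply, norm_inv] at hc
  exact (inv_strictAnti₀ (norm_pos_iff.mpr (hne c (subset_closure (mem_ball_self hr))))
    (h z hz)).not_ge hc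

theorem Complex.eventually_exists_zero_of_isolated_zero {X : Type*} [TopologicalSpace X]
    {F : X → ℂ → ℂ} (hF : Continuous (Function.uncurry F)) (hFd : ∀ x, Differentiable ℂ (F x))
    {a : X} {c : ℂ} (hc : F a c = 0) (hiso : ∀ᶠ t in 𝓝[≠] c, F a t ≠ 0) {U : Set ℂ}
    (hU : U ∈ 𝓝 c) : ∀ᶠ x in 𝓝 a, ∃ t ∈ U, F x t = 0 := by
  obtain ⟨ε, hε, hball⟩ := Metric.eventually_nhds_iff.mp
    ((eventually_nhdsWithin_iff.mp hiso).and hU)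
  have hr : 0 < ε / 2 := half_pos hε
  have hrε : closedBall c (ε / 2) ⊆ ball c ε := closedBall_subset_ball (half_lt_self hε)
  have hsphere : ∀ t ∈ sphere c (ε / 2), F a t ≠ 0 := fun t ht =>
    (hball (hrε (sphere_subset_closedBall ht))).1 (ne_of_mem_sphere ht hr.ne')
  have hFa : Continuous (F a) := hF.comp (Continuous.prodMk_right a)
  obtain ⟨t₀, ht₀, hmin⟩ := (isCompact_sphere c (ε / 2)).exists_isMinOn
    (NormedSpace.sphere_nonempty.mpr hr.le) hFa.norm.continuousOn
  set m := ‖F a t₀‖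
  have hm : 0 < m := norm_pos_iff.mpr (hsphere t₀ ht₀)
  have hclose : ∀ᶠ x in 𝓝 a, ∀ t ∈ sphere c (ε / 2), ‖F x t - F a t‖ < m / 2 :=
    (isCompact_sphere c (ε / 2)).eventually_forall_of_forall_eventually fun t _ =>
      ContinuousAt.eventually_lt (hF.sub (hFa.comp continuous_snd)).norm.continuousAt
        continuousAt_const (by simpa using half_pos hm)
  have hcenter : ∀ᶠ x in 𝓝 a, ‖F x c‖ < m / 2 :=
    ContinuousAt.eventually_lt (hF.comp (Continuous.prodMk_left c)).norm.continuousAt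
      continuousAt_const (by simpa [hc] using half_pos hm)
  filter_upwards [hclose, hcenter] with x hxs hxc
  obtain ⟨t, ht, hzero⟩ := exists_zero_of_norm_lt_norm_on_sphere hr (hFd x).diffContOnCl
    fun t ht => by
      have hmt : m ≤ ‖F a t‖ := hmin ht
      linarith [norm_le_norm_add_norm_sub (F x t) (F a t), hxs t ht]
  exact ⟨t, (hball (hrε ht)).2, hzero⟩

theorem Complex.exists_im_pos_of_eventually {a : ℂ} (ha : 0 ≤ a.im) {P : ℂ → Prop}
    (h : ∀ᶠ x in 𝓝 a, P x) : ∃ x, P x ∧ 0 < x.im :=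
  (mem_closure_iff_nhds (s := {x : ℂ | 0 < x.im})).mp
    (by rw [closure_setOfPred_lt_im]; exact ha) _ h

theorem MvPolynomial.differentiable_eval {ι : Type*} [Fintype ι] (p : MvPolynomial ι ℂ) :
    Differentiable ℂ fun x : ι → ℂ => eval x p := fun x =>
  (AnalyticOnNhd.eval_continuousLinearMap (.id ℂ (ι → ℂ)) p x trivial).differentiableAt

theorem MvPolynomial.eventually_eval_line_ne_zero {ι : Type*} [Fintype ι] (q : MvPolynomial ι ℂ)
    (z : ι → ℂ) {w : ι → ℂ} (hw : eval w q ≠ 0) :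
    ∀ᶠ t in 𝓝[≠] (0 : ℂ), eval (z + t • (w - z)) q ≠ 0 := by
  have hg : AnalyticOnNhd ℂ (fun t : ℂ => eval (z + t • (w - z)) q) univ := fun t _ =>
    ((differentiable_eval q).comp (by fun_prop)).analyticAt t
  refine not_frequently.mp fun hzero => hw ?_
  simpa using hg.eqOn_zero_of_preconnected_of_frequently_eq_zero isPreconnected_univ
    (mem_univ 0) (by simpa using hzero) (mem_univ 1)

/-- Specialization of a stable polynomial at `x₁ = a` with `Im a ≥ 0` is stable. -/
theorem stmt_2 (n : ℕ) (p : MvPolynomial (Fin (n + 1)) ℂ) (hp : Stable p)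
    (a : ℂ) (ha : 0 ≤ a.im) (q : MvPolynomial (Fin n) ℂ)
    (hq : ∀ z : Fin n → ℂ, eval z q = eval (Fin.cons a z) p) :
    Stable q := by
  rcases hp with rfl | hp
  · exact .inl (MvPolynomial.funext fun z => by simp [hq])
  refine or_iff_not_imp_left.mpr fun hq0 z hz hqz => ?_
  obtain ⟨w, hw⟩ : ∃ w, eval w q ≠ 0 := by
    by_contra! h
    exact hq0 (MvPolynomial.funext fun z => by simp [h])
  set F : ℂ → ℂ → ℂ := fun x t => eval (Fin.cons x (z + t • (w - z))) p
  have hFa (t : ℂ) : F a t = eval (z + t • (w - z)) q := (hq _).symm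
  have hF : Continuous (Function.uncurry F) := (continuous_eval p).comp (by fun_prop)
  have hFd (x : ℂ) : Differentiable ℂ (F x) := (differentiable_eval p).comp (by fun_prop)
  have hU : ∀ᶠ t in 𝓝 (0 : ℂ), ∀ i, 0 < (z i + t * (w i - z i)).im :=
    eventually_all.mpr fun i => ContinuousAt.eventually_lt continuousAt_const (by fun_prop)
      (by simpa using hz i)
  obtain ⟨x, ⟨t, ht, hFt⟩, hx⟩ := Complex.exists_im_pos_of_eventually ha
    (Complex.eventually_exists_zero_of_isolated_zero hF hFd (by simpa [hFa] using hqz)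
      (by simpa only [hFa] using q.eventually_eval_line_ne_zero z hw) hU)
  exact hp _ (Fin.forall_fin_succ.mpr ⟨by simpa using hx, by simpa using ht⟩) hFt
end
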